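/- arXiv:1006.1443 — 4 statements merged into one kernel-verified Lean document; each statement's English description precedes it below -/
import Mathlib

section
/- Let 0 ≤ α ≤ 1/2, let w_1,…,w_n be arbitrary nonnegative reals, and let X_1,…,X_n be independent random variables each equal to −1 with probability α and 1 otherwise. Set X = Σ_{i=1}^n w_i X_i. Then P(X < 0) ≤ 1/2, and for every δ ≥ 0, P(X > δ) ≥ P(X < −δ). Symmetrically, if all w_i ≤ 0, then P(X > 0) ≤ 1/2 and P(X < −δ) ≥ P(X > δ) for every δ ≥ 0. -/
open MeasureTheory ProbabilityTheory Finset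

/-!
Since `P(X i = 1) = α + (1 - 2α)`, the weight of a sign pattern with minus-set `S` expands as
`∏ i, (if i ∈ S then α else α + (1 - 2α)) = ∑ T ⊇ S, α ^ #T * (1 - 2α) ^ #Tᶜ`: choose the set `T`
of coordinates that contribute the `α` term. For fixed `T`, the patterns counted are all `S ⊆ T`
with equal weight, and `S ↦ T \ S` (flipping the signs on `T`) sends the weighted sum `s` to
`2 ∑ i ∈ Tᶜ, w i - s ≥ -s`, so it injects `{s < -δ}` into `{δ < s}`. Taking `δ = 0` gives
`P(X < 0) ≤ P(X > 0)`, hence `P(X < 0) ≤ 1/2`; the case `w ≤ 0` follows by replacing `w` by `-w`.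
-/

namespace SignedSum

lemma measure_eq_one_eq_one_sub {Ω : Type*} [MeasurableSpace Ω] {μ : Measure Ω}
    [IsProbabilityMeasure μ] {Y : Ω → ℝ} (hY : Measurable Y) (hval : ∀ ω, Y ω = -1 ∨ Y ω = 1) :
    μ {ω | Y ω = 1} = 1 - μ {ω | Y ω = -1} := by
  have hcompl : {ω | Y ω = 1} = {ω | Y ω = -1}ᶜ := by
    ext ω
    rcases hval ω with h | h <;> simp [h] <;> norm_num
  exact hcompl ▸ prob_compl_eq_one_sub (hY (measurableSet_singleton _))

lemma measure_le_half_of_le_of_disjoint {Ω : Type*} [MeasurableSpace Ω] {μ : Measure Ω}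
    [IsProbabilityMeasure μ] {A B : Set Ω} (hB : MeasurableSet B) (hAB : Disjoint A B)
    (h : μ A ≤ μ B) : μ A ≤ 1 / 2 := by
  rw [ENNReal.le_div_iff_mul_le (Or.inl two_ne_zero) (Or.inl ENNReal.ofNat_ne_top), mul_two]
  calc μ A + μ A ≤ μ A + μ B := by gcongr
    _ = μ (A ∪ B) := (measure_union hAB hB).symm
    _ ≤ 1 := prob_le_one

variable {ι : Type*} [DecidableEq ι]

def signs (S : Finset ι) (i : ι) : ℝ := if i ∈ S then -1 else 1

lemma signs_injective : Function.Injective (signs (ι := ι)) := by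
  intro S T h
  ext i
  have := congrFun h i
  by_cases hS : i ∈ S <;> by_cases hT : i ∈ T <;> simp_all [signs] <;> norm_num at this

variable [Fintype ι]

lemma sum_mul_signs_add_sum_mul_signs_sdiff {S T : Finset ι} (hST : S ⊆ T) (w : ι → ℝ) :
    ∑ i, w i * signs S i + ∑ i, w i * signs (T \ S) i = 2 * ∑ i ∈ Tᶜ, w i := by
  have key : ∀ i, w i * signs S i + w i * signs (T \ S) i = if i ∈ Tᶜ then 2 * w i else 0 := by
    intro i
    by_cases hT : i ∈ T
    · by_cases hS : i ∈ S <;> simp [signs, hS, hT]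
    · have hS : i ∉ S := fun h => hT (hST h)
      simp [signs, hS, hT]
      ring
  rw [← sum_add_distrib, sum_congr rfl fun i _ => key i, sum_ite_mem, univ_inter, mul_sum]

variable {w : ι → ℝ} {δ : ℝ}

lemma card_lt_neg_le_card_gt (hw : ∀ i, 0 ≤ w i) (T : Finset ι) :
    #{S | ∑ i, w i * signs S i < -δ ∧ S ⊆ T} ≤ #{S | δ < ∑ i, w i * signs S i ∧ S ⊆ T} := by
  refine card_le_card_of_injOn (T \ ·) ?_ ?_
  · intro S hS
    simp only [coe_filter, mem_univ, true_and, Set.mem_ofPred_eq] at hS ⊢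
    have hsum := sum_mul_signs_add_sum_mul_signs_sdiff hS.2 w
    have hfixed : 0 ≤ ∑ i ∈ Tᶜ, w i := sum_nonneg fun i _ => hw i
    exact ⟨by linarith, sdiff_subset⟩
  · intro S hS S' hS' h
    simp only [coe_filter, mem_univ, true_and, Set.mem_ofPred_eq] at hS hS'
    rw [← Finset.sdiff_sdiff_eq_self hS.2, ← Finset.sdiff_sdiff_eq_self hS'.2]
    exact congrArg (T \ ·) h

lemma prod_ite_mem_eq_sum {R : Type*} [CommSemiring R] (a r : R) (S : Finset ι) :
    ∏ i, (if i ∈ S then a else a + r) = ∑ T, if S ⊆ T then a ^ #T * r ^ #Tᶜ else 0 := by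
  have hsplit : ∀ i, (if i ∈ S then a else a + r) = a + if i ∉ S then r else 0 := by
    intro i; split_ifs <;> simp_all
  simp only [hsplit, Fintype.prod_add, prod_ite_zero, prod_const, mul_ite, mul_zero]
  refine sum_congr rfl fun T _ => ?_
  congr 1
  simp [subset_iff, not_imp_comm]

lemma sum_prod_lt_neg_le {R : Type*} [CommSemiring R] [PartialOrder R] [IsOrderedRing R]
    {a r : R} (ha : 0 ≤ a) (hr : 0 ≤ r) (hw : ∀ i, 0 ≤ w i) :
    ∑ S with ∑ i, w i * signs S i < -δ, ∏ i, (if i ∈ S then a else a + r) ≤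
      ∑ S with δ < ∑ i, w i * signs S i, ∏ i, (if i ∈ S then a else a + r) := by
  have regroup : ∀ (P : Finset ι → Prop) [DecidablePred P],
      ∑ S with P S, ∑ T, (if S ⊆ T then a ^ #T * r ^ #Tᶜ else 0) =
        ∑ T, #{S | P S ∧ S ⊆ T} • (a ^ #T * r ^ #Tᶜ) := by
    intro P _
    rw [sum_comm]
    refine sum_congr rfl fun T _ => ?_
    rw [sum_ite, sum_const_zero, add_zero, sum_const, filter_filter]
  simp only [prod_ite_mem_eq_sum, regroup]
  exact sum_le_sum fun T _ => nsmul_le_nsmul_left (by positivity) (card_lt_neg_le_card_gt hw T)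

variable {Ω : Type*} [MeasurableSpace Ω] {μ : Measure Ω} {X : ι → Ω → ℝ}

lemma measure_eq_sum_prod (hmeas : ∀ i, Measurable (X i)) (hval : ∀ i ω, X i ω = -1 ∨ X i ω = 1)
    (hindep : iIndepFun X μ) (P : (ι → ℝ) → Prop) [DecidablePred P] :
    μ {ω | P (fun i => X i ω)} = ∑ S with P (signs S), ∏ i, μ {ω | X i ω = signs S i} := by
  set minus : Ω → Finset ι := fun ω => {i | X i ω = -1}
  have hX : ∀ ω, (fun i => X i ω) = signs (minus ω) := by
    intro ω
    funext i
    rcases hval i ω with h | h <;> simp [minus, signs, h]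
  have hfiber : ∀ S, minus ⁻¹' {S} = ⋂ i, {ω | X i ω = signs S i} := by
    intro S
    ext ω
    simp only [Set.mem_preimage, Set.mem_singleton_iff, Set.mem_iInter, Set.mem_ofPred_eq,
      ← funext_iff, hX, signs_injective.eq_iff]
  have hevent : {ω | P (fun i => X i ω)} = minus ⁻¹' ↑({S | P (signs S)} : Finset (Finset ι)) := by
    ext ω
    simp [hX]
  rw [hevent, ← sum_measure_preimage_singleton _ fun S _ => by
    rw [hfiber]; exact .iInter fun i => hmeas i (measurableSet_singleton _)]
  refine sum_congr rfl fun S _ => ?_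
  rw [hfiber]
  exact hindep.meas_iInter fun i => ⟨{signs S i}, measurableSet_singleton _, rfl⟩

lemma measure_sum_lt_neg_le [IsProbabilityMeasure μ] {α : ℝ} (hα0 : 0 ≤ α) (hα1 : α ≤ 1/2)
    (hmeas : ∀ i, Measurable (X i)) (hval : ∀ i ω, X i ω = -1 ∨ X i ω = 1)
    (hprob : ∀ i, μ {ω | X i ω = -1} = ENNReal.ofReal α) (hindep : iIndepFun X μ)
    (hw : ∀ i, 0 ≤ w i) (δ : ℝ) :
    μ {ω | ∑ i, w i * X i ω < -δ} ≤ μ {ω | δ < ∑ i, w i * X i ω} := by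
  have hatom : ∀ S i, μ {ω | X i ω = signs S i} =
      if i ∈ S then ENNReal.ofReal α else ENNReal.ofReal α + ENNReal.ofReal (1 - 2 * α) := by
    intro S i
    by_cases hi : i ∈ S
    · simp [signs, hi, hprob]
    · rw [if_neg hi, ← ENNReal.ofReal_add hα0 (by linarith)]
      simp only [signs, hi, if_false, measure_eq_one_eq_one_sub (hmeas _) (hval _), hprob]
      rw [← ENNReal.ofReal_one, ← ENNReal.ofReal_sub _ hα0]
      ring_nf
  rw [measure_eq_sum_prod hmeas hval hindep (fun x => ∑ i, w i * x i < -δ),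
    measure_eq_sum_prod hmeas hval hindep (fun x => δ < ∑ i, w i * x i)]
  simp only [hatom]
  exact sum_prod_lt_neg_le zero_le zero_le hw

lemma measure_sum_neg_le_half [IsProbabilityMeasure μ] {α : ℝ} (hα0 : 0 ≤ α) (hα1 : α ≤ 1/2)
    (hmeas : ∀ i, Measurable (X i)) (hval : ∀ i ω, X i ω = -1 ∨ X i ω = 1)
    (hprob : ∀ i, μ {ω | X i ω = -1} = ENNReal.ofReal α) (hindep : iIndepFun X μ)
    (hw : ∀ i, 0 ≤ w i) :
    μ {ω | ∑ i, w i * X i ω < 0} ≤ 1 / 2 := by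
  have hsum : Measurable fun ω => ∑ i, w i * X i ω :=
    Finset.measurable_sum _ fun i _ => (hmeas i).const_mul _
  refine measure_le_half_of_le_of_disjoint (measurableSet_lt (measurable_const (a := 0)) hsum) ?_ ?_
  · exact Set.disjoint_left.2 fun _ h₁ h₂ => lt_asymm (α := ℝ) h₁ h₂
  · simpa using measure_sum_lt_neg_le hα0 hα1 hmeas hval hprob hindep hw 0

end SignedSum

open SignedSum in
/-- For independent random signs `X i` with `P(X i = -1) = α ≤ 1/2`
and weights `w i`, the weighted sum `X = Σ w i X i` satisfies: if all `w i ≥ 0` then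
`P(X < 0) ≤ 1/2` and `P(X > δ) ≥ P(X < -δ)` for all `δ ≥ 0`; symmetrically if all
`w i ≤ 0` then `P(X > 0) ≤ 1/2` and `P(X < -δ) ≥ P(X > δ)`. -/
theorem stmt5_signed_sum_median
    (k : ℕ) (α : ℝ) (hα0 : 0 ≤ α) (hα1 : α ≤ 1/2)
    {Ω : Type} [MeasurableSpace Ω] (μ : Measure Ω) [IsProbabilityMeasure μ]
    (X : Fin k → Ω → ℝ) (hmeas : ∀ i, Measurable (X i))
    (hval : ∀ i ω, X i ω = -1 ∨ X i ω = 1)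
    (hprob : ∀ i, μ {ω | X i ω = -1} = ENNReal.ofReal α)
    (hindep : iIndepFun X μ)
    (w : Fin k → ℝ) :
    ((∀ i, 0 ≤ w i) →
      μ {ω | (∑ i, w i * X i ω) < 0} ≤ 1/2 ∧
      ∀ δ : ℝ, 0 ≤ δ →
        μ {ω | (∑ i, w i * X i ω) < -δ} ≤ μ {ω | δ < ∑ i, w i * X i ω}) ∧
    ((∀ i, w i ≤ 0) →
      μ {ω | 0 < (∑ i, w i * X i ω)} ≤ 1/2 ∧
      ∀ δ : ℝ, 0 ≤ δ →
        μ {ω | δ < ∑ i, w i * X i ω} ≤ μ {ω | (∑ i, w i * X i ω) < -δ}) := by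
  refine ⟨fun hw => ⟨measure_sum_neg_le_half hα0 hα1 hmeas hval hprob hindep hw,
    fun δ _ => measure_sum_lt_neg_le hα0 hα1 hmeas hval hprob hindep hw δ⟩, fun hw => ?_⟩
  have hw' : ∀ i, 0 ≤ -w i := fun i => neg_nonneg.2 (hw i)
  have hneg : ∀ ω, ∑ i, -w i * X i ω = -∑ i, w i * X i ω := fun ω => by
    simp only [neg_mul, sum_neg_distrib]
  refine ⟨?_, fun δ _ => ?_⟩
  · simpa [hneg] using measure_sum_neg_le_half hα0 hα1 hmeas hval hprob hindep hw'
  · simpa [hneg, neg_lt, lt_neg] using measure_sum_lt_neg_le hα0 hα1 hmeas hval hprob hindep hw' δ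
end

section
/- Let 0 ≤ α ≤ 1/2, let w_1,…,w_n be arbitrary nonnegative rationals, and let X_1,…,X_n be independent random variables each equal to −1 with probability α and 1 otherwise. Set X = Σ_{i=1}^n w_i X_i. Then P(X > 2·E[X]) ≤ 7/8. Symmetrically, if all w_i are nonpositive rationals, then P(X < 2·E[X]) ≤ 7/8. -/
/-!
Write each sign as `Xᵢ = Cᵢ + Dᵢ`: with probability `1 - 2α` it is frozen at `1` (`Cᵢ = 1`,
`Dᵢ = 0`), and with probability `2α` it is a fair coin (`Cᵢ = 0`, `Dᵢ = ±1`). Then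
`C = Σ wᵢ Cᵢ ≥ 0` has mean `E[X]`, so Markov gives `P(C > 2 E[X]) ≤ 1/2`, while flipping the
fair coins preserves the law, fixes `C` and negates `D = Σ wᵢ Dᵢ`. So on `{C ≤ 2 E[X]}` one of
`C + D` and `C - D` is at most `2 E[X]`, hence `P(X ≤ 2 E[X]) ≥ 1/4`: the bound holds with `3/4`.
-/

open MeasureTheory ProbabilityTheory unitInterval

section Symmetrization

variable {Ω : Type*} [MeasurableSpace Ω] {P : Measure Ω}

lemma integral_eq_zero_of_comp_eq_neg {D : Ω → ℝ} (hD : AEStronglyMeasurable D P) {τ : Ω → Ω}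
    (hτ : MeasurePreserving τ P P) (hDτ : ∀ x, D (τ x) = -D x) : ∫ x, D x ∂P = 0 := by
  have hcomp : ∫ x, D (τ x) ∂P = ∫ x, D x ∂P := by
    rw [← integral_map hτ.aemeasurable (by rwa [hτ.map_eq]), hτ.map_eq]
  simp only [hDτ, integral_neg] at hcomp
  linarith

variable [IsProbabilityMeasure P]

lemma measureReal_two_mul_integral_lt_le {C : Ω → ℝ} (hC0 : 0 ≤ C) (hC : Integrable C P) :
    P.real {x | 2 * ∫ y, C y ∂P < C x} ≤ 1 / 2 := by
  set m := ∫ y, C y ∂P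
  rcases (integral_nonneg hC0).eq_or_lt with hm | hm
  · have hC_ae : C =ᵐ[P] 0 := (integral_eq_zero_iff_of_nonneg hC0 hC).1 hm.symm
    have hnull : P {x | 2 * m < C x} = 0 := by
      refine measure_mono_null (fun x hx ↦ ?_) (ae_iff.1 hC_ae)
      simp only [Set.mem_ofPred_eq, Pi.zero_apply] at hx ⊢
      linarith
    simp [measureReal_def, hnull]
  · have markov := mul_meas_ge_le_integral_of_nonneg (ae_of_all _ hC0) hC (2 * m)
    have hmono : P.real {x | 2 * m < C x} ≤ P.real {x | 2 * m ≤ C x} :=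
      measureReal_mono (Set.ofPred_subset_ofPred.2 fun _ ↦ le_of_lt)
    nlinarith

lemma measure_two_mul_integral_lt_add_le {C D : Ω → ℝ} (hC0 : 0 ≤ C) (hC : Integrable C P)
    (hD : Integrable D P) {τ : Ω → Ω} (hτ : MeasurePreserving τ P P)
    (hCτ : ∀ x, C (τ x) = C x) (hDτ : ∀ x, D (τ x) = -D x) :
    P {x | 2 * ∫ y, (C y + D y) ∂P < C x + D x} ≤ 3 / 4 := by
  rw [integral_add hC hD, integral_eq_zero_of_comp_eq_neg hD.aestronglyMeasurable hτ hDτ,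
    add_zero]
  set t := 2 * ∫ y, C y ∂P
  set B := {x | C x + D x ≤ t}
  have hB : NullMeasurableSet B P :=
    nullMeasurableSet_le (hC.add hD).aemeasurable aemeasurable_const
  have hcover : {x | C x ≤ t} ⊆ B ∪ τ ⁻¹' B := by
    intro x hx
    by_cases hDx : D x ≤ 0
    · left
      simp only [B, Set.mem_ofPred_eq] at hx ⊢
      linarith
    · right
      simp only [B, Set.mem_preimage, Set.mem_ofPred_eq, hCτ, hDτ] at hx ⊢
      linarith
  have hhalf : P.real {x | C x ≤ t} ≤ 2 * P.real B := by
    calc P.real {x | C x ≤ t} ≤ P.real (B ∪ τ ⁻¹' B) := measureReal_mono hcover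
      _ ≤ P.real B + P.real (τ ⁻¹' B) := measureReal_union_le _ _
      _ = 2 * P.real B := by rw [hτ.measureReal_preimage hB]; ring
  have hmarkov := measureReal_two_mul_integral_lt_le hC0 hC
  have hC_le : P.real {x | C x ≤ t} = 1 - P.real {x | t < C x} := by
    rw [← probReal_compl_eq_one_sub₀ (nullMeasurableSet_lt aemeasurable_const hC.aemeasurable)]
    simp only [Set.compl_ofPred, not_lt]
  have hB_compl : P.real {x | t < C x + D x} = 1 - P.real B := by
    rw [← probReal_compl_eq_one_sub₀ hB]
    simp only [B, Set.compl_ofPred, not_le]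
  rw [← ofReal_measureReal, show (3 / 4 : ENNReal) = ENNReal.ofReal (3 / 4) by
    rw [ENNReal.ofReal_div_of_pos (by norm_num)]; norm_num]
  exact ENNReal.ofReal_le_ofReal (by linarith)

end Symmetrization

lemma measure_map_two_mul_integral_lt {Ω Ω' : Type*} [MeasurableSpace Ω] [MeasurableSpace Ω']
    {μ : Measure Ω} {f : Ω → Ω'} (hf : Measurable f) {g : Ω' → ℝ} (hg : Measurable g) :
    μ.map f {y | 2 * ∫ z, g z ∂μ.map f < g y} = μ {x | 2 * ∫ z, g (f z) ∂μ < g (f x)} := by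
  rw [integral_map hf.aemeasurable hg.aestronglyMeasurable,
    Measure.map_apply hf (measurableSet_lt measurable_const hg)]
  rfl

section Bernoulli

variable {X : Type*} [MeasurableSpace X]

lemma bernoulliMeasure_swap (x y : X) (p : I) : Ber(y, x, σ p) = Ber(x, y, p) := by
  rw [bernoulliMeasure_def, bernoulliMeasure_def, symm_symm, add_comm]

lemma map_eq_bernoulliMeasure [MeasurableSingletonClass X] {Ω : Type*} [MeasurableSpace Ω]
    {μ : Measure Ω} [IsProbabilityMeasure μ] {f : Ω → X} (hf : Measurable f) {x y : X}
    (hval : ∀ ω, f ω = x ∨ f ω = y) {p : I} (hp : μ (f ⁻¹' {x}) = toNNReal p) :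
    μ.map f = Ber(x, y, p) := by
  classical
  ext s hs
  rw [Measure.map_apply hf hs, bernoulliMeasure_apply p hs]
  have hpre : ∀ t : Set X, (x ∈ s ↔ x ∈ t) → (y ∈ s ↔ y ∈ t) → f ⁻¹' s = f ⁻¹' t :=
    fun t hxt hyt ↦ Set.ext fun ω ↦ by
      rcases hval ω with h | h <;> simp only [Set.mem_preimage, h, hxt, hyt]
  split_ifs with hx hy hy
  · rw [hpre Set.univ (iff_of_true hx trivial) (iff_of_true hy trivial), Set.preimage_univ,
      measure_univ]
  · rw [hpre {x} (iff_of_true hx rfl) (iff_of_false hy fun hyx ↦ hy (hyx ▸ hx))]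
    exact hp
  · rw [hpre {x}ᶜ (iff_of_false hx fun hxx ↦ hxx rfl) (iff_of_true hy fun hyx ↦ hx (hyx ▸ hy)),
      Set.preimage_compl, prob_compl_eq_one_sub (hf (measurableSet_singleton x)), hp]
    refine (ENNReal.eq_sub_of_add_eq ENNReal.coe_ne_top ?_).symm
    rw [← ENNReal.coe_add, toNNReal_symm_add_toNNReal, ENNReal.coe_one]
  · rw [hpre ∅ (iff_of_false hx id) (iff_of_false hy id), Set.preimage_empty, measure_empty]

end Bernoulli

/-- A point `(m, e)` of `Bool × Bool` encodes a sign: it is frozen at `1` unless the coin `m`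
says to mix, in which case the sign is read off the coin `e`. -/
noncomputable def signCoupling (q r : I) : Measure (Bool × Bool) :=
  Ber(true, false, q).prod Ber(true, false, r)

def fixedPart (s : Bool × Bool) : ℝ := if s.1 then 0 else 1

def fairSignPart (s : Bool × Bool) : ℝ := if s.1 then (if s.2 then -1 else 1) else 0

lemma fixedPart_nonneg (s : Bool × Bool) : 0 ≤ fixedPart s := by
  unfold fixedPart; split <;> norm_num

lemma fairSignPart_prodMap_not (s : Bool × Bool) :
    fairSignPart (Prod.map id not s) = -fairSignPart s := by
  rcases s with ⟨_ | _, _ | _⟩ <;> norm_num [fairSignPart]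

namespace signCoupling

variable (q r : I)

instance : IsProbabilityMeasure (signCoupling q r) := by
  unfold signCoupling; infer_instance

lemma map_fixedPart_add_fairSignPart :
    (signCoupling q r).map (fun s ↦ fixedPart s + fairSignPart s) = Ber(-1, 1, q * r) := by
  refine map_eq_bernoulliMeasure .of_discrete
    (by rintro ⟨_ | _, _ | _⟩ <;> norm_num [fixedPart, fairSignPart]) ?_
  have hpre : (fun s ↦ fixedPart s + fairSignPart s) ⁻¹' {-1} = {true} ×ˢ {true} := by
    ext ⟨_ | _, _ | _⟩ <;> norm_num [fixedPart, fairSignPart]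
  rw [hpre, signCoupling, Measure.prod_prod,
    bernoulliMeasure_apply_of_mem_of_notMem _ (by simp) (Set.mem_singleton _) (by simp),
    bernoulliMeasure_apply_of_mem_of_notMem _ (by simp) (Set.mem_singleton _) (by simp),
    ← ENNReal.coe_mul]
  rfl

lemma measurePreserving_prodMap_not (hr : σ r = r) :
    MeasurePreserving (Prod.map id not) (signCoupling q r) (signCoupling q r) := by
  refine (MeasurePreserving.id _).prod ⟨.of_discrete, ?_⟩
  rw [map_bernoulliMeasure, Bool.not_true, Bool.not_false, ← hr, bernoulliMeasure_swap, hr]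

end signCoupling

lemma measure_pi_bernoulliMeasure_two_mul_integral_lt_le {ι : Type*} [Fintype ι] {p : I}
    (hp : (p : ℝ) ≤ 1 / 2) {w : ι → ℝ} (hw : 0 ≤ w) :
    Measure.pi (fun _ : ι ↦ Ber(-1, 1, p))
      {x | 2 * ∫ y, ∑ i, w i * y i ∂Measure.pi (fun _ : ι ↦ Ber(-1, 1, p)) < ∑ i, w i * x i}
      ≤ 3 / 4 := by
  set q : I := ⟨2 * p, by linarith [p.2.1], by linarith⟩
  set half : I := ⟨1 / 2, by norm_num, by norm_num⟩
  have hp_eq : p = q * half := Subtype.ext (by simp [q, half]; ring)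
  have hhalf : σ half = half := Subtype.ext (by simp [half, coe_symm_eq]; norm_num)
  have hlaw : (Measure.pi fun _ : ι ↦ signCoupling q half).map
      (fun s i ↦ fixedPart (s i) + fairSignPart (s i)) = Measure.pi fun _ : ι ↦ Ber(-1, 1, p) := by
    rw [Measure.pi_map_pi (f := fun _ s ↦ fixedPart s + fairSignPart s)
        fun _ ↦ Measurable.of_discrete.aemeasurable,
      signCoupling.map_fixedPart_add_fairSignPart, hp_eq]
  rw [← hlaw, measure_map_two_mul_integral_lt .of_discrete (by fun_prop)]
  have hsymm := measure_two_mul_integral_lt_add_le (P := Measure.pi fun _ : ι ↦ signCoupling q half)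
    (C := fun s ↦ ∑ i, w i * fixedPart (s i)) (D := fun s ↦ ∑ i, w i * fairSignPart (s i))
    (fun s ↦ Finset.sum_nonneg fun i _ ↦ mul_nonneg (hw i) (fixedPart_nonneg _))
    .of_finite .of_finite (τ := fun s i ↦ Prod.map id not (s i))
    (measurePreserving_pi _ _ fun _ ↦ signCoupling.measurePreserving_prodMap_not q half hhalf)
    (fun s ↦ rfl)
    (fun s ↦ by simp only [fairSignPart_prodMap_not, mul_neg, Finset.sum_neg_distrib])
  simpa only [mul_add, Finset.sum_add_distrib] using hsymm

lemma measure_two_mul_integral_lt_le_of_iIndepFun {ι : Type*} [Fintype ι] {Ω : Type*}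
    [MeasurableSpace Ω] {μ : Measure Ω} [IsProbabilityMeasure μ] {X : ι → Ω → ℝ}
    (hmeas : ∀ i, Measurable (X i)) (hval : ∀ i ω, X i ω = -1 ∨ X i ω = 1) {p : I}
    (hp : (p : ℝ) ≤ 1 / 2) (hprob : ∀ i, μ {ω | X i ω = -1} = toNNReal p)
    (hindep : iIndepFun X μ) {w : ι → ℝ} (hw : 0 ≤ w) :
    μ {ω | 2 * ∫ ω', ∑ i, w i * X i ω' ∂μ < ∑ i, w i * X i ω} ≤ 3 / 4 := by
  have hlaw : μ.map (fun ω i ↦ X i ω) = Measure.pi fun _ ↦ Ber(-1, 1, p) := by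
    rw [(iIndepFun_iff_map_fun_eq_pi_map fun i ↦ (hmeas i).aemeasurable).1 hindep]
    congr with i : 1
    exact map_eq_bernoulliMeasure (hmeas i) (hval i) (hprob i)
  rw [← measure_map_two_mul_integral_lt (measurable_pi_lambda _ hmeas)
    (g := fun x ↦ ∑ i, w i * x i) (by fun_prop), hlaw]
  exact measure_pi_bernoulliMeasure_two_mul_integral_lt_le hp hw

/-- For independent random signs `X i` with `P(X i = -1) = α ≤ 1/2`
and rational weights `w i`, the weighted sum `X = Σ w i X i` satisfies
`P(X > 2 E[X]) ≤ 7/8` when all `w i ≥ 0`, and symmetrically `P(X < 2 E[X]) ≤ 7/8`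
when all `w i ≤ 0`. -/
theorem stmt6_anticoncentration_at_twice_mean
    (k : ℕ) (α : ℝ) (hα0 : 0 ≤ α) (hα1 : α ≤ 1/2)
    {Ω : Type} [MeasurableSpace Ω] (μ : Measure Ω) [IsProbabilityMeasure μ]
    (X : Fin k → Ω → ℝ) (hmeas : ∀ i, Measurable (X i))
    (hval : ∀ i ω, X i ω = -1 ∨ X i ω = 1)
    (hprob : ∀ i, μ {ω | X i ω = -1} = ENNReal.ofReal α)
    (hindep : iIndepFun X μ)
    (w : Fin k → ℚ) :
    ((∀ i, 0 ≤ w i) →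
      μ {ω | 2 * (∫ ω', (∑ i, (w i : ℝ) * X i ω') ∂μ) < ∑ i, (w i : ℝ) * X i ω}
        ≤ 7/8) ∧
    ((∀ i, w i ≤ 0) →
      μ {ω | (∑ i, (w i : ℝ) * X i ω) < 2 * ∫ ω', (∑ i, (w i : ℝ) * X i ω') ∂μ}
        ≤ 7/8) := by
  set p : I := ⟨α, hα0, by linarith⟩
  have hprob' : ∀ i, μ {ω | X i ω = -1} = toNNReal p := fun i ↦
    (hprob i).trans (ENNReal.ofReal_eq_coe_nnreal hα0)
  have hbound : ∀ v : Fin k → ℝ, 0 ≤ v →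
      μ {ω | 2 * ∫ ω', ∑ i, v i * X i ω' ∂μ < ∑ i, v i * X i ω} ≤ 7 / 8 := fun v hv ↦
    (measure_two_mul_integral_lt_le_of_iIndepFun hmeas hval hα1 hprob' hindep hv).trans <| by
      rw [ENNReal.div_le_iff (by norm_num) (by norm_num), mul_comm, ← mul_div_assoc,
        ENNReal.le_div_iff_mul_le (by norm_num) (by norm_num)]
      norm_num
  refine ⟨fun hw ↦ hbound _ fun i ↦ by simpa using hw i, fun hw ↦ ?_⟩
  have hneg := hbound (fun i ↦ -(w i : ℝ)) fun i ↦ by simpa using hw i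
  simpa only [neg_mul, Finset.sum_neg_distrib, integral_neg, mul_neg, neg_lt_neg_iff] using hneg
end

section
/- Consider the CCC_n network (n = 2^m wires) with any fixed orientation of the balancers, and suppose the number of tokens on each input wire is an independent uniform random variable on {0,1,…,n−1}. Then every balancer b in any layer ℓ, 1 ≤ ℓ ≤ log n, satisfies P(Odd(b) = 1) = 1/2; moreover, for every output wire i, the random variables { Odd(b) : b ∈ B_i } are mutually independent. -/
open MeasureTheory ProbabilityTheory
open scoped ENNReal

namespace BalNet

variable {n : ℕ}

/-- A matching given as a finset of ordered pairs `(u,v)` with `u < v`,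
pairwise vertex-disjoint. -/
def IsMatching (E : Finset (Fin n × Fin n)) : Prop :=
  (∀ e ∈ E, e.1 < e.2) ∧
    ∀ e ∈ E, ∀ e' ∈ E, e ≠ e' →
      e.1 ≠ e'.1 ∧ e.1 ≠ e'.2 ∧ e.2 ≠ e'.1 ∧ e.2 ≠ e'.2

/-- The balancing matrix `P` associated to a matching. -/
noncomputable def balMatrix (E : Finset (Fin n × Fin n)) : Matrix (Fin n) (Fin n) ℝ :=
  Matrix.of fun u v =>
    if u = v then (if ∃ e ∈ E, u = e.1 ∨ u = e.2 then (1 : ℝ)/2 else 1)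
    else if (u, v) ∈ E ∨ (v, u) ∈ E then 1/2 else 0

/-- One balancing round: every matched pair splits the sum of its loads as evenly as
possible; `pt e` is the endpoint of `e` receiving the excess token (if any). -/
noncomputable def balStep (E : Finset (Fin n × Fin n)) (pt : Fin n × Fin n → Fin n)
    (y : Fin n → ℤ) : Fin n → ℤ := fun v =>
  if h : ∃ e ∈ E, v = e.1 ∨ v = e.2 then
    if v = pt h.choose then Int.fdiv (y h.choose.1 + y h.choose.2 + 1) 2
    else Int.fdiv (y h.choose.1 + y h.choose.2) 2
  else y v

/-- The load vector after `t` rounds (matching `M i` and orientation `pt i` are used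
in round `i`, for `i = 1, 2, …`). -/
noncomputable def loads (M : ℕ → Finset (Fin n × Fin n)) (pt : ℕ → Fin n × Fin n → Fin n)
    (y0 : Fin n → ℤ) : ℕ → Fin n → ℤ
  | 0 => y0
  | t + 1 => balStep (M (t + 1)) (pt (t + 1)) (loads M pt y0 t)

/-- Ordered matrix product `P^{[i,j]} = P i * P (i+1) * ⋯ * P j`
(the identity matrix when `i > j`). -/
noncomputable def matProd (P : ℕ → Matrix (Fin n) (Fin n) ℝ) (i j : ℕ) :
    Matrix (Fin n) (Fin n) ℝ :=
  ((List.range' i (j + 1 - i)).map P).prod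

/-- The second largest eigenvalue in absolute value of a (symmetric doubly stochastic)
matrix: the supremum of `|μ|` over eigenvalues `μ` possessing an eigenvector orthogonal
to the all-ones vector. -/
noncomputable def lambda2 (A : Matrix (Fin n) (Fin n) ℝ) : ℝ :=
  sSup {r : ℝ | ∃ μ : ℝ, r = |μ| ∧
    ∃ x : Fin n → ℝ, x ≠ 0 ∧ (∑ i, x i) = 0 ∧ A.mulVec x = μ • x}

/-- The realized orientation after the perturbation: `up t e = true` means that the
balancer `e` of round `t` initially points to `e.1`, and `fl t e = true` means that it
is flipped; the result is the vertex receiving the excess token. -/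
def ptFrom (up fl : ℕ → Fin n × Fin n → Bool) : ℕ → Fin n × Fin n → Fin n :=
  fun t e => if up t e = fl t e then e.2 else e.1

end BalNet

open BalNet

/-- The layer-`ℓ` matching of the `CCC` network on `2^m` wires: two wires are joined
by a balancer iff their binary representations differ exactly in bit `ℓ`. -/
def cccMatching (m ℓ : ℕ) : Finset (Fin (2^m) × Fin (2^m)) :=
  Finset.univ.filter (fun e => e.1 < e.2 ∧ (e.1.val ^^^ e.2.val) = 2^(ℓ-1))

/-- The wire differing from `u` exactly in bit `ℓ`. -/
def partnerWire (m ℓ : ℕ) (u : Fin (2^m)) : Fin (2^m) :=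
  if h : u.val ^^^ 2^(ℓ-1) < 2^m then ⟨u.val ^^^ 2^(ℓ-1), h⟩ else u

/-- `reachWire m k ℓ u i`: starting from wire `u` just after layer `ℓ`, the wire `i`
can be reached by a path through the `k` consecutive layers `ℓ+1, …, ℓ+k`. -/
def reachWire (m : ℕ) : ℕ → ℕ → Fin (2^m) → Fin (2^m) → Prop
  | 0, _, u, i => u = i
  | k+1, ℓ, u, i =>
      reachWire m k (ℓ+1) u i ∨ reachWire m k (ℓ+1) (partnerWire m (ℓ+1) u) i

/-- A balancer `e` of layer `ℓ` affects the wire `i` at the position just after layer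
`ℓ'` (for `ℓ ≤ ℓ'`): there is a path through consecutive layers from `e` to `i`. -/
def balAffects (m ℓ : ℕ) (e : Fin (2^m) × Fin (2^m)) (ℓ' : ℕ) (i : Fin (2^m)) : Prop :=
  reachWire m (ℓ' - ℓ) ℓ e.1 i ∨ reachWire m (ℓ' - ℓ) ℓ e.2 i

/-- The top wire (wire number 1) of the `CCC`. -/
def topWire (m : ℕ) : Fin (2^m) := ⟨0, Nat.two_pow_pos m⟩

/-!
After `k` layers of the CCC, the load of a wire `v` is `∑ ⌊x_w / 2^k⌋` over the `2^k` wires `w`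
agreeing with `v` in all bits `≥ k` (the cone of `v`), plus a remainder that depends only on the
residues `x_w mod 2^k` on that cone. Hence the parity of the total input of a layer-`(k+1)`
balancer `e` is the sum of bit `k` of the inputs on its cone plus a function of lower bits.

Let the balancer `(k+1, e)` control the input digit "bit `k` of `x_{e.1}`". Two balancers of
`B_i` in the same layer lie in different cones, so, going up bit by bit, the odd-indicators of
`B_i` and the uncontrolled digits determine the input. Comparing cardinalities, the map
`x ↦ (uncontrolled digits, odd-indicators)` is a bijection from `{0, …, n-1}^n` onto
`{0,1}^K × {0,1}^{B_i}`; so under uniform inputs every pattern of odd-indicators has probability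
`2^{-|B_i|}`, which gives both the marginals `1/2` and the independence.
-/

open Finset

theorem Nat.xor_two_pow_mod_two_pow (a t : ℕ) : (a ^^^ 2^t) % 2^t = a % 2^t := by
  apply Nat.eq_of_testBit_eq
  intro i
  simp only [Nat.testBit_mod_two_pow, Nat.testBit_xor, Nat.testBit_two_pow]
  grind

theorem Nat.xor_two_pow_div_two_pow (a t : ℕ) : (a ^^^ 2^t) / 2^t = a / 2^t ^^^ 1 := by
  simp only [← Nat.shiftRight_eq_div_pow, Nat.shiftRight_xor_distrib]
  rw [Nat.shiftRight_eq_div_pow (2^t), Nat.div_self (Nat.two_pow_pos t)]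

theorem Nat.div_two_eq_div_two_iff (p q : ℕ) : p / 2 = q / 2 ↔ p = q ∨ p = q ^^^ 1 := by
  rcases Nat.even_or_odd q with h | h
  · rw [Nat.xor_one_of_even h]; rcases h with ⟨r, rfl⟩; omega
  · rw [Nat.xor_one_of_odd h]; rcases h with ⟨r, rfl⟩; omega

theorem Int.ediv_two_pow_eq (x : ℤ) (k : ℕ) : x / 2^k = 2 * (x / 2^(k+1)) + x / 2^k % 2 := by
  rw [pow_succ, ← Int.ediv_ediv_of_nonneg (by positivity), Int.mul_ediv_add_emod]

theorem Int.ModEq.ediv_two_pow {x x' : ℤ} {k : ℕ} (h : x ≡ x' [ZMOD 2^(k+1)]) :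
    x / 2^k ≡ x' / 2^k [ZMOD 2] := by
  obtain ⟨t, rfl⟩ := Int.modEq_iff_add_fac.mp h
  rw [pow_succ, mul_assoc, Int.add_mul_ediv_left _ _ (by positivity)]
  exact Int.modEq_iff_add_fac.mpr ⟨t, rfl⟩

theorem Int.ModEq.two_pow_succ {x x' : ℤ} {k : ℕ} (hlow : x ≡ x' [ZMOD 2^k])
    (hdigit : x / 2^k ≡ x' / 2^k [ZMOD 2]) : x ≡ x' [ZMOD 2^(k+1)] := by
  have hmod : x % 2^k = x' % 2^k := hlow
  rw [← Int.mul_ediv_add_emod x (2^k), ← Int.mul_ediv_add_emod x' (2^k), hmod, pow_succ]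
  exact (hdigit.mul_left' (c := 2^k)).add_right _

theorem Int.card_Ico_zero_two_pow (m : ℕ) : #(Ico (0 : ℤ) (2^m)) = 2^m := by
  simpa using Int.toNat_natCast (2^m)

theorem Finset.sum_ediv_two_pow_eq {ι : Type*} (s : Finset ι) (f : ι → ℤ) (k : ℕ) :
    ∑ i ∈ s, f i / 2^k = 2 * ∑ i ∈ s, f i / 2^(k+1) + ∑ i ∈ s, f i / 2^k % 2 := by
  rw [mul_sum, ← sum_add_distrib]
  exact sum_congr rfl fun i _ => Int.ediv_two_pow_eq (f i) k

theorem Finset.card_filter_snd_eq_of_injOn {α β γ : Type*} [DecidableEq γ] {s : Finset α}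
    {A : Finset β} {B : Finset γ} {Φ : α → β × γ} (hmaps : ∀ x ∈ s, Φ x ∈ A ×ˢ B)
    (hinj : Set.InjOn Φ s) (hcard : #A * #B ≤ #s) {c : γ} (hc : c ∈ B) :
    #{x ∈ s | (Φ x).2 = c} = #A := by
  classical
  have himage : s.image Φ = A ×ˢ B :=
    eq_of_subset_of_card_le (image_subset_iff.mpr hmaps)
      (by rwa [card_product, card_image_of_injOn hinj])
  have hfilter : (A ×ˢ B).filter (fun y => y.2 = c) = A ×ˢ {c} := by
    ext ⟨a, b⟩
    simp only [mem_filter, mem_product, mem_singleton]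
    grind
  calc #{x ∈ s | (Φ x).2 = c}
      = #({x ∈ s | (Φ x).2 = c}.image Φ) :=
        (card_image_of_injOn (hinj.mono (filter_subset _ _))).symm
    _ = #(A ×ˢ {c}) := by rw [← hfilter, ← himage, filter_image]
    _ = #A := by simp

theorem ProbabilityTheory.iIndepFun_of_measure_eq_prod {Ω ι β : Type*} [MeasurableSpace Ω]
    {μ : Measure Ω} [IsProbabilityMeasure μ] [Fintype ι] [Countable β] [MeasurableSpace β]
    [MeasurableSingletonClass β] {f : ι → Ω → β} {S : ι → Set β} (hf : ∀ i, Measurable (f i))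
    (hS : ∀ i ω, f i ω ∈ S i)
    (h : ∀ ε : ι → β, (∀ i, ε i ∈ S i) →
      μ {ω | ∀ i, f i ω = ε i} = ∏ i, μ {ω | f i ω = ε i}) :
    iIndepFun f μ := by
  rw [iIndepFun_iff_map_fun_eq_pi_map fun i => (hf i).aemeasurable]
  refine Measure.ext_of_singleton fun ε => ?_
  rw [Measure.map_apply (measurable_pi_lambda _ hf) (measurableSet_singleton ε),
    ← Set.univ_pi_singleton, Measure.pi_pi]
  simp only [Measure.map_apply (hf _) (measurableSet_singleton _)]
  by_cases hε : ∀ i, ε i ∈ S i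
  · have hpre : (fun ω i => f i ω) ⁻¹' Set.univ.pi (fun i => {ε i}) =
        {ω | ∀ i, f i ω = ε i} := by
      ext; simp
    rw [hpre]
    exact h ε hε
  · obtain ⟨i, hi⟩ := not_forall.mp hε
    have hempty : f i ⁻¹' {ε i} = ∅ :=
      Set.eq_empty_of_forall_notMem fun ω hω => hi ((show f i ω = ε i from hω) ▸ hS i ω)
    have hnull : μ (f i ⁻¹' {ε i}) = 0 := by rw [hempty, measure_empty]
    rw [prod_eq_zero (mem_univ i) hnull]
    exact measure_mono_null (fun ω hω => hω i (Set.mem_univ i)) hnull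

structure ProbabilityTheory.IsIndepUniform {Ω ι α : Type*} [MeasurableSpace Ω] [MeasurableSpace α]
    (X : ι → Ω → α) (S : Finset α) (μ : Measure Ω) : Prop where
  measurable : ∀ i, Measurable (X i)
  indep : iIndepFun X μ
  mem : ∀ i ω, X i ω ∈ S
  measure_eq : ∀ i, ∀ a ∈ S, μ {ω | X i ω = a} = (#S : ℝ≥0∞)⁻¹

namespace ProbabilityTheory.IsIndepUniform

variable {Ω ι α : Type*} [MeasurableSpace Ω] [MeasurableSpace α] [MeasurableSingletonClass α]
  [Fintype ι] [DecidableEq ι] {X : ι → Ω → α} {S : Finset α} {μ : Measure Ω}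

theorem measure_eq_card_mul (hX : IsIndepUniform X S μ) (Q : (ι → α) → Prop)
    [DecidablePred Q] :
    μ {ω | Q fun i => X i ω} =
      #{x ∈ Fintype.piFinset fun _ : ι => S | Q x} * (#S : ℝ≥0∞)⁻¹ ^ Fintype.card ι := by
  have hatom : ∀ x ∈ Fintype.piFinset fun _ : ι => S,
      μ (⋂ i ∈ (univ : Finset ι), X i ⁻¹' {x i}) = (#S : ℝ≥0∞)⁻¹ ^ Fintype.card ι := by
    intro x hx
    rw [hX.indep.measure_inter_preimage_eq_mul univ fun i _ => measurableSet_singleton (x i),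
      ← card_univ, ← prod_const]
    exact prod_congr rfl fun i _ => hX.measure_eq i (x i) (Fintype.mem_piFinset.mp hx i)
  have hunion : {ω | Q fun i => X i ω} =
      ⋃ x ∈ {x ∈ Fintype.piFinset fun _ : ι => S | Q x},
        ⋂ i ∈ (univ : Finset ι), X i ⁻¹' {x i} := by
    ext ω
    simp only [Set.mem_ofPred_eq, Set.mem_iUnion, Set.mem_iInter, mem_filter, Set.mem_preimage,
      Set.mem_singleton_iff, Fintype.mem_piFinset, mem_univ, true_imp_iff, exists_prop]
    exact ⟨fun hQ => ⟨_, ⟨fun i => hX.mem i ω, hQ⟩, fun _ => rfl⟩,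
      fun ⟨x, ⟨_, hQ⟩, hx⟩ => (funext hx : (fun i => X i ω) = x) ▸ hQ⟩
  rw [hunion, measure_biUnion_finset, sum_congr rfl fun x hx => hatom x (mem_filter.mp hx).1,
    sum_const, nsmul_eq_mul]
  · intro x _ y _ hxy
    refine Set.disjoint_left.mpr fun ω hωx hωy => hxy (funext fun i => ?_)
    simp only [Set.mem_iInter, Set.mem_preimage, Set.mem_singleton_iff] at hωx hωy
    exact (hωx i (mem_univ i)).symm.trans (hωy i (mem_univ i))
  · exact fun x _ => univ.measurableSet_biInter fun i _ =>
      hX.measurable i (measurableSet_singleton _)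

theorem measure_snd_eq_inv_card [IsProbabilityMeasure μ] (hX : IsIndepUniform X S μ)
    {β γ : Type*} {Φ : (ι → α) → β × γ} {A : Finset β} {B : Finset γ}
    (hmaps : ∀ x ∈ Fintype.piFinset fun _ : ι => S, Φ x ∈ A ×ˢ B)
    (hinj : Set.InjOn Φ ↑(Fintype.piFinset fun _ : ι => S))
    (hcard : #S ^ Fintype.card ι = #A * #B) {c : γ} (hc : c ∈ B) :
    μ {ω | (Φ fun i => X i ω).2 = c} = (#B : ℝ≥0∞)⁻¹ := by
  classical
  obtain ⟨ω⟩ := nonempty_of_isProbabilityMeasure μ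
  have hA : (#A : ℝ≥0∞) ≠ 0 := by
    have := (mem_product.mp (hmaps _ (Fintype.mem_piFinset.mpr fun i => hX.mem i ω))).1
    exact_mod_cast (card_pos.mpr ⟨_, this⟩).ne'
  have hcube : #A * #B ≤ #(Fintype.piFinset fun _ : ι => S) := by
    rw [Fintype.card_piFinset, prod_const, card_univ, hcard]
  rw [hX.measure_eq_card_mul fun x => (Φ x).2 = c, card_filter_snd_eq_of_injOn hmaps hinj hcube hc,
    ← ENNReal.inv_pow, ← Nat.cast_pow, hcard, Nat.cast_mul,
    ENNReal.mul_inv (.inr (ENNReal.natCast_ne_top _)) (.inl (ENNReal.natCast_ne_top _)),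
    ← mul_assoc, ENNReal.mul_inv_cancel hA (ENNReal.natCast_ne_top _), one_mul]

end ProbabilityTheory.IsIndepUniform

namespace BalNet

variable {n : ℕ}

theorem balStep_eq_of_unique {E : Finset (Fin n × Fin n)} {pt : Fin n × Fin n → Fin n}
    {y : Fin n → ℤ} {v : Fin n} {e : Fin n × Fin n} (he : e ∈ E) (hv : v = e.1 ∨ v = e.2)
    (huniq : ∀ e' ∈ E, v = e'.1 ∨ v = e'.2 → e' = e) :
    balStep E pt y v = (y e.1 + y e.2 + if v = pt e then 1 else 0) / 2 := by
  have hex : ∃ e ∈ E, v = e.1 ∨ v = e.2 := ⟨e, he, hv⟩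
  rw [balStep, dif_pos hex, huniq _ hex.choose_spec.1 hex.choose_spec.2]
  split_ifs <;> simp [Int.fdiv_eq_ediv_of_nonneg]

end BalNet

namespace CCC

variable {m : ℕ}

lemma partnerWire_val {k : ℕ} (hk : k < m) (u : Fin (2^m)) :
    (partnerWire m (k+1) u).val = u.val ^^^ 2^k := by
  have hlt : u.val ^^^ 2^k < 2^m :=
    Nat.xor_lt_two_pow u.isLt (Nat.pow_lt_pow_right one_lt_two hk)
  simp [partnerWire, hlt]

lemma partnerWire_val_mod (k : ℕ) (u : Fin (2^m)) :
    (partnerWire m (k+1) u).val % 2^k = u.val % 2^k := by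
  unfold partnerWire
  split_ifs
  · simpa using Nat.xor_two_pow_mod_two_pow u.val k
  · rfl

lemma mem_cccMatching_succ {k : ℕ} {e : Fin (2^m) × Fin (2^m)} :
    e ∈ cccMatching m (k+1) ↔ e.1 < e.2 ∧ e.1.val ^^^ e.2.val = 2^k := by
  simp [cccMatching]

lemma partnerWire_fst_of_mem {k : ℕ} {e : Fin (2^m) × Fin (2^m)}
    (he : e ∈ cccMatching m (k+1)) : partnerWire m (k+1) e.1 = e.2 := by
  have hxor : e.1.val ^^^ 2^k = e.2.val := by
    rw [← (mem_cccMatching_succ.mp he).2, ← Nat.xor_assoc, Nat.xor_self, Nat.zero_xor]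
  ext
  simp [partnerWire, hxor]

lemma partnerWire_snd_of_mem {k : ℕ} {e : Fin (2^m) × Fin (2^m)}
    (he : e ∈ cccMatching m (k+1)) : partnerWire m (k+1) e.2 = e.1 := by
  have hxor : e.2.val ^^^ 2^k = e.1.val := by
    rw [← (mem_cccMatching_succ.mp he).2, Nat.xor_comm e.1.val, ← Nat.xor_assoc, Nat.xor_self,
      Nat.zero_xor]
  ext
  simp [partnerWire, hxor]

lemma eq_of_mem_cccMatching {k : ℕ} {e e' : Fin (2^m) × Fin (2^m)} {v : Fin (2^m)}
    (he : e ∈ cccMatching m (k+1)) (he' : e' ∈ cccMatching m (k+1))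
    (hv : v = e.1 ∨ v = e.2) (hv' : v = e'.1 ∨ v = e'.2) : e' = e := by
  have hlt := (mem_cccMatching_succ.mp he).1
  have hlt' := (mem_cccMatching_succ.mp he').1
  have h1 := partnerWire_fst_of_mem he
  have h2 := partnerWire_snd_of_mem he
  have h1' := partnerWire_fst_of_mem he'
  have h2' := partnerWire_snd_of_mem he'
  rcases hv with rfl | rfl <;> rcases hv' with hv' | hv'
  · exact Prod.ext hv'.symm (by rw [← h1', ← hv', h1])
  · have he2 : e.2 = e'.1 := by rw [← h1, hv', h2']
    exact absurd (by rw [he2, hv']; exact hlt') (lt_asymm hlt)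
  · have he1 : e.1 = e'.2 := by rw [← h2, hv', h1']
    exact absurd (by rw [he1, hv']; exact hlt') (lt_asymm hlt)
  · exact Prod.ext (by rw [← h2', ← hv', h2]) hv'.symm

lemma exists_mem_cccMatching {k : ℕ} (hk : k < m) (v : Fin (2^m)) :
    ∃ e ∈ cccMatching m (k+1), v = e.1 ∨ v = e.2 := by
  have hval := partnerWire_val hk v
  have hne : partnerWire m (k+1) v ≠ v := fun h => by
    have := congrArg Fin.val h
    rw [hval] at this
    simpa using congrArg (v.val ^^^ ·) this
  rcases lt_or_gt_of_ne hne with h | h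
  · refine ⟨(partnerWire m (k+1) v, v), mem_cccMatching_succ.mpr ⟨h, ?_⟩, .inr rfl⟩
    simp [hval]
  · refine ⟨(v, partnerWire m (k+1) v), mem_cccMatching_succ.mpr ⟨h, ?_⟩, .inl rfl⟩
    simp [hval]

/-- The wires whose inputs can reach `v` within the first `ℓ` layers. -/
def cone (m ℓ : ℕ) (v : Fin (2^m)) : Finset (Fin (2^m)) :=
  univ.filter fun w => w.val / 2^ℓ = v.val / 2^ℓ

@[simp]
lemma mem_cone {ℓ : ℕ} {v w : Fin (2^m)} : w ∈ cone m ℓ v ↔ w.val / 2^ℓ = v.val / 2^ℓ := by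
  simp [cone]

lemma mem_cone_self (ℓ : ℕ) (v : Fin (2^m)) : v ∈ cone m ℓ v := mem_cone.mpr rfl

lemma cone_zero (v : Fin (2^m)) : cone m 0 v = {v} := by
  ext w
  simp [Fin.val_inj]

lemma cone_succ {k : ℕ} (hk : k < m) (v : Fin (2^m)) :
    cone m (k+1) v = cone m k v ∪ cone m k (partnerWire m (k+1) v) := by
  ext w
  simp only [mem_union, mem_cone, partnerWire_val hk, Nat.xor_two_pow_div_two_pow, pow_succ,
    ← Nat.div_div_eq_div_mul]
  exact Nat.div_two_eq_div_two_iff _ _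

lemma disjoint_cone_partnerWire {k : ℕ} (hk : k < m) (v : Fin (2^m)) :
    Disjoint (cone m k v) (cone m k (partnerWire m (k+1) v)) := by
  rw [disjoint_left]
  intro w hw hw'
  rw [mem_cone] at hw hw'
  rw [hw, partnerWire_val hk, Nat.xor_two_pow_div_two_pow] at hw'
  simpa using congrArg (v.val / 2^k ^^^ ·) hw'

lemma cone_succ_of_mem_cccMatching {k : ℕ} (hk : k < m) {e : Fin (2^m) × Fin (2^m)}
    (he : e ∈ cccMatching m (k+1)) : cone m (k+1) e.1 = cone m k e.1 ∪ cone m k e.2 := by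
  rw [cone_succ hk, partnerWire_fst_of_mem he]

lemma disjoint_cone_of_mem_cccMatching {k : ℕ} (hk : k < m) {e : Fin (2^m) × Fin (2^m)}
    (he : e ∈ cccMatching m (k+1)) : Disjoint (cone m k e.1) (cone m k e.2) := by
  simpa [partnerWire_fst_of_mem he] using disjoint_cone_partnerWire hk e.1

lemma mem_cone_of_mem_cccMatching {k : ℕ} (hk : k < m) {e : Fin (2^m) × Fin (2^m)}
    (he : e ∈ cccMatching m (k+1)) {v : Fin (2^m)} (hv : v = e.1 ∨ v = e.2) :
    v ∈ cone m (k+1) e.1 := by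
  rw [cone_succ_of_mem_cccMatching hk he]
  rcases hv with rfl | rfl
  · exact mem_union_left _ (mem_cone_self _ _)
  · exact mem_union_right _ (mem_cone_self _ _)

lemma reachWire_val_mod {k ℓ : ℕ} {u i : Fin (2^m)} (h : reachWire m k ℓ u i) :
    u.val % 2^ℓ = i.val % 2^ℓ := by
  induction k generalizing ℓ u with
  | zero => exact congrArg (·.val % 2^ℓ) h
  | succ k ih =>
    have hdvd : 2^ℓ ∣ 2^(ℓ+1) := pow_dvd_pow 2 ℓ.le_succ
    rcases h with h | h
    · rw [← Nat.mod_mod_of_dvd u.val hdvd, ih h, Nat.mod_mod_of_dvd _ hdvd]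
    · rw [← partnerWire_val_mod, ← Nat.mod_mod_of_dvd _ hdvd, ih h, Nat.mod_mod_of_dvd _ hdvd]

lemma exists_val_mod_eq_of_balAffects {ℓ ℓ' : ℕ} {e : Fin (2^m) × Fin (2^m)} {i : Fin (2^m)}
    (h : balAffects m ℓ e ℓ' i) : ∃ v, (v = e.1 ∨ v = e.2) ∧ v.val % 2^ℓ = i.val % 2^ℓ := by
  rcases h with h | h
  · exact ⟨e.1, .inl rfl, reachWire_val_mod h⟩
  · exact ⟨e.2, .inr rfl, reachWire_val_mod h⟩

variable (pt : ℕ → Fin (2^m) × Fin (2^m) → Fin (2^m))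

lemma exists_loads_succ_eq {k : ℕ} (hk : k < m) (v : Fin (2^m)) :
    ∃ c : ℤ, ∀ x : Fin (2^m) → ℤ,
      loads (cccMatching m) pt x (k+1) v =
        (loads (cccMatching m) pt x k v +
          loads (cccMatching m) pt x k (partnerWire m (k+1) v) + c) / 2 := by
  obtain ⟨e, he, hv⟩ := exists_mem_cccMatching hk v
  refine ⟨if v = pt (k+1) e then 1 else 0, fun x => ?_⟩
  rw [loads, BalNet.balStep_eq_of_unique he hv fun e' he' hv' =>
    eq_of_mem_cccMatching he he' hv hv']
  rcases hv with rfl | rfl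
  · rw [partnerWire_fst_of_mem he]
  · rw [partnerWire_snd_of_mem he, add_comm (loads _ _ _ k e.2)]

theorem loads_sub_sum_cone_eq {ℓ : ℕ} (hℓ : ℓ ≤ m) {v : Fin (2^m)} {x x' : Fin (2^m) → ℤ}
    (hx : ∀ w ∈ cone m ℓ v, x w ≡ x' w [ZMOD 2^ℓ]) :
    loads (cccMatching m) pt x ℓ v - ∑ w ∈ cone m ℓ v, x w / 2^ℓ =
      loads (cccMatching m) pt x' ℓ v - ∑ w ∈ cone m ℓ v, x' w / 2^ℓ := by
  induction ℓ generalizing v with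
  | zero => simp [cone_zero, loads]
  | succ k ih =>
    have hk : k < m := hℓ
    set v' := partnerWire m (k+1) v
    obtain ⟨c, hc⟩ := exists_loads_succ_eq pt hk v
    have hsplit := cone_succ hk v
    set D : (Fin (2^m) → ℤ) → ℤ := fun y =>
      loads (cccMatching m) pt y k v + loads (cccMatching m) pt y k v' -
        ∑ w ∈ cone m (k+1) v, y w / 2^k
    have hD : D x = D x' := by
      have hlow : ∀ w ∈ cone m (k+1) v, x w ≡ x' w [ZMOD 2^k] := fun w hw =>
        (hx w hw).of_dvd (pow_dvd_pow 2 k.le_succ)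
      have h1 := ih hk.le fun w hw => hlow w (hsplit ▸ mem_union_left _ hw)
      have h2 := ih hk.le fun w hw => hlow w (hsplit ▸ mem_union_right _ hw)
      simp only [D, hsplit, sum_union (disjoint_cone_partnerWire hk v)]
      linarith
    have hdigits : ∑ w ∈ cone m (k+1) v, x w / 2^k % 2 =
        ∑ w ∈ cone m (k+1) v, x' w / 2^k % 2 :=
      sum_congr rfl fun w hw => (hx w hw).ediv_two_pow
    have hy : ∀ y : Fin (2^m) → ℤ,
        loads (cccMatching m) pt y (k+1) v - ∑ w ∈ cone m (k+1) v, y w / 2^(k+1) =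
          (D y + ∑ w ∈ cone m (k+1) v, y w / 2^k % 2 + c) / 2 := by
      intro y
      have hsum := sum_ediv_two_pow_eq (cone m (k+1) v) y k
      rw [hc y, sub_eq_iff_eq_add, ← Int.add_mul_ediv_left _ _ two_ne_zero]
      congr 1
      simp only [D]
      linarith
    rw [hy x, hy x', hD, hdigits]

/-- The paper's `Odd(b)` for `b = (ℓ, e)`. -/
noncomputable def oddIndicator (x : Fin (2^m) → ℤ) (b : ℕ × (Fin (2^m) × Fin (2^m))) : ℤ :=
  (loads (cccMatching m) pt x (b.1 - 1) b.2.1 + loads (cccMatching m) pt x (b.1 - 1) b.2.2) % 2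

theorem ediv_two_pow_modEq_of_oddIndicator_eq {k : ℕ} (hk : k < m)
    {e : Fin (2^m) × Fin (2^m)} (he : e ∈ cccMatching m (k+1)) {x x' : Fin (2^m) → ℤ}
    (hlow : ∀ w ∈ cone m (k+1) e.1, x w ≡ x' w [ZMOD 2^k])
    (hdigits : ∀ w ∈ (cone m (k+1) e.1).erase e.1, x w / 2^k ≡ x' w / 2^k [ZMOD 2])
    (hodd : oddIndicator pt x (k+1, e) = oddIndicator pt x' (k+1, e)) :
    x e.1 / 2^k ≡ x' e.1 / 2^k [ZMOD 2] := by
  have hsplit := cone_succ_of_mem_cccMatching hk he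
  have h1 := loads_sub_sum_cone_eq pt hk.le fun w hw => hlow w (hsplit ▸ mem_union_left _ hw)
  have h2 := loads_sub_sum_cone_eq pt hk.le fun w hw => hlow w (hsplit ▸ mem_union_right _ hw)
  have hodd' : loads (cccMatching m) pt x k e.1 + loads (cccMatching m) pt x k e.2 ≡
      loads (cccMatching m) pt x' k e.1 + loads (cccMatching m) pt x' k e.2 [ZMOD 2] := hodd
  have hsum : ∑ w ∈ cone m (k+1) e.1, x w / 2^k ≡
      ∑ w ∈ cone m (k+1) e.1, x' w / 2^k [ZMOD 2] := by
    refine Int.modEq_iff_dvd.mpr ?_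
    rw [hsplit, sum_union (disjoint_cone_of_mem_cccMatching hk he),
      sum_union (disjoint_cone_of_mem_cccMatching hk he)]
    convert Int.modEq_iff_dvd.mp hodd' using 1
    linarith
  rw [← add_sum_erase _ _ (mem_cone_self _ e.1), ← add_sum_erase _ _ (mem_cone_self _ e.1)] at hsum
  exact Int.ModEq.add_right_cancel (Int.ModEq.sum hdigits) hsum

def IsBalancer (m : ℕ) (b : ℕ × (Fin (2^m) × Fin (2^m))) : Prop :=
  1 ≤ b.1 ∧ b.1 ≤ m ∧ b.2 ∈ cccMatching m b.1

def IsSeparated {ι : Type*} (β : ι → ℕ × (Fin (2^m) × Fin (2^m))) : Prop :=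
  ∀ j j', (β j).1 = (β j').1 → (β j).2.1 ∈ cone m (β j).1 (β j').2.1 → j = j'

/-- Each cone of layer `ℓ` holds only one wire congruent to `i` modulo `2^ℓ`. -/
theorem isSeparated_balAffects (i : Fin (2^m)) :
    IsSeparated (fun b : {p : ℕ × (Fin (2^m) × Fin (2^m)) //
      1 ≤ p.1 ∧ p.1 ≤ m ∧ p.2 ∈ cccMatching m p.1 ∧ balAffects m p.1 p.2 m i} => b.val) := by
  intro ⟨⟨ℓ, e⟩, hℓ, hℓm, he, haff⟩ ⟨⟨ℓ', e'⟩, _, _, he', haff'⟩ hlayer hcone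
  obtain rfl : ℓ = ℓ' := hlayer
  obtain ⟨k, rfl⟩ : ∃ k, ℓ = k + 1 := ⟨ℓ - 1, by omega⟩
  obtain ⟨v, hv, hvi⟩ := exists_val_mod_eq_of_balAffects haff
  obtain ⟨v', hv', hvi'⟩ := exists_val_mod_eq_of_balAffects haff'
  have hvv' : v = v' := by
    refine Fin.ext (Nat.ext_div_mod ?_ (hvi.trans hvi'.symm))
    rw [mem_cone.mp (mem_cone_of_mem_cccMatching hℓm he hv),
      mem_cone.mp (mem_cone_of_mem_cccMatching hℓm he' hv')]
    exact mem_cone.mp hcone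
  subst hvv'
  exact Subtype.ext (Prod.ext rfl (eq_of_mem_cccMatching he' he hv' hv))

section Family

variable {ι : Type*} {β : ι → ℕ × (Fin (2^m) × Fin (2^m))}

/-- Bit `k` of `x_{e.1}`, the input digit controlled by the balancer `(k+1, e)`. -/
def repDigit (hβ : ∀ j, IsBalancer m (β j)) (j : ι) : Fin (2^m) × Fin m :=
  ((β j).2.1, ⟨(β j).1 - 1, by have := hβ j; unfold IsBalancer at this; omega⟩)

lemma repDigit_eq_iff (hβ : ∀ j, IsBalancer m (β j)) {j : ι} {w : Fin (2^m)} {k : Fin m} :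
    repDigit hβ j = (w, k) ↔ (β j).1 = k + 1 ∧ (β j).2.1 = w := by
  have := (hβ j).1
  simp only [repDigit, Prod.ext_iff, Fin.ext_iff]
  omega

lemma repDigit_injective (hβ : ∀ j, IsBalancer m (β j)) (hsep : IsSeparated β) :
    Function.Injective (repDigit hβ) := by
  intro j j' h
  obtain ⟨hlayer, hwire⟩ := (repDigit_eq_iff hβ).mp h
  have := (hβ j').1
  exact hsep j j' (by simp only at hlayer; omega) (by rw [hwire]; exact mem_cone_self _ _)

/-- Induction on the bit: a controlled digit is recovered from the odd-indicator of its
balancer, because the rest of that balancer's cone is uncontrolled at that bit. -/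
theorem eq_of_oddIndicator_eq (hβ : ∀ j, IsBalancer m (β j)) (hsep : IsSeparated β)
    {x x' : Fin (2^m) → ℤ} (hx : ∀ w, 0 ≤ x w ∧ x w < 2^m) (hx' : ∀ w, 0 ≤ x' w ∧ x' w < 2^m)
    (hfree : ∀ p ∉ Set.range (repDigit hβ),
      x p.1 / 2^(p.2 : ℕ) ≡ x' p.1 / 2^(p.2 : ℕ) [ZMOD 2])
    (hodd : ∀ j, oddIndicator pt x (β j) = oddIndicator pt x' (β j)) : x = x' := by
  have hmod : ∀ k ≤ m, ∀ w, x w ≡ x' w [ZMOD 2^k] := by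
    intro k hk
    induction k with
    | zero => simp [Int.modEq_one]
    | succ k ih =>
      have hk : k < m := hk
      replace ih := ih hk.le
      intro w
      refine (ih w).two_pow_succ ?_
      by_cases hw : (w, ⟨k, hk⟩) ∈ Set.range (repDigit hβ)
      · obtain ⟨j, hj⟩ := hw
        obtain ⟨hlayer, rfl⟩ := (repDigit_eq_iff hβ).mp hj
        have hβj : β j = (k+1, (β j).2) := Prod.ext hlayer rfl
        have he : (β j).2 ∈ cccMatching m (k+1) := hlayer ▸ (hβ j).2.2
        refine ediv_two_pow_modEq_of_oddIndicator_eq pt hk he (fun w _ => ih w)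
          (fun w' hw' => hfree (w', ⟨k, hk⟩) ?_) (by rw [← hβj]; exact hodd j)
        rintro ⟨j', hj'⟩
        obtain ⟨hlayer', rfl⟩ := (repDigit_eq_iff hβ).mp hj'
        obtain ⟨hne, hcone⟩ := mem_erase.mp hw'
        exact hne (congrArg (fun j => (β j).2.1)
          (hsep j' j (hlayer'.trans hlayer.symm) (by rwa [hlayer'])))
      · exact hfree _ hw
  funext w
  have := hmod m le_rfl w
  rwa [Int.ModEq, Int.emod_eq_of_lt (hx w).1 (hx w).2,
    Int.emod_eq_of_lt (hx' w).1 (hx' w).2] at this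

variable {Ω : Type*} [MeasurableSpace Ω] {μ : Measure Ω} [IsProbabilityMeasure μ]
  {input : Fin (2^m) → Ω → ℤ}

theorem measure_oddIndicator_eq_pattern [Fintype ι]
    (hX : IsIndepUniform input (Ico 0 (2^m)) μ) (hβ : ∀ j, IsBalancer m (β j))
    (hsep : IsSeparated β) {ε : ι → ℤ} (hε : ∀ j, ε j ∈ ({0, 1} : Finset ℤ)) :
    μ {ω | ∀ j, oddIndicator pt (fun v => input v ω) (β j) = ε j} = 2⁻¹ ^ Fintype.card ι := by
  classical
  let Φ : (Fin (2^m) → ℤ) → ({p // p ∉ Set.range (repDigit hβ)} → ℤ) × (ι → ℤ) := fun x =>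
    (fun p => x p.1.1 / 2^(p.1.2 : ℕ) % 2, fun j => oddIndicator pt x (β j))
  have hbit : ∀ z : ℤ, z % 2 ∈ ({0, 1} : Finset ℤ) := fun z => by
    rcases Int.emod_two_eq z with h | h <;> simp [h]
  have hbounds : ∀ x ∈ Fintype.piFinset fun _ : Fin (2^m) => Ico (0 : ℤ) (2^m),
      ∀ w, 0 ≤ x w ∧ x w < 2^m := fun x hx w => mem_Ico.mp (Fintype.mem_piFinset.mp hx w)
  have hinj : Set.InjOn Φ ↑(Fintype.piFinset fun _ : Fin (2^m) => Ico (0 : ℤ) (2^m)) :=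
    fun x hx x' hx' h => eq_of_oddIndicator_eq pt hβ hsep (hbounds x hx) (hbounds x' hx')
      (fun p hp => congrFun (congrArg Prod.fst h) ⟨p, hp⟩) (congrFun (congrArg Prod.snd h))
  have hN : Fintype.card ι ≤ Fintype.card (Fin (2^m) × Fin m) :=
    Fintype.card_le_of_injective _ (repDigit_injective hβ hsep)
  have hcard : #(Ico (0 : ℤ) (2^m)) ^ Fintype.card (Fin (2^m)) =
      #(Fintype.piFinset fun _ : {p // p ∉ Set.range (repDigit hβ)} => ({0, 1} : Finset ℤ)) *
        #(Fintype.piFinset fun _ : ι => ({0, 1} : Finset ℤ)) := by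
    simp only [Fintype.card_piFinset, prod_const, card_univ, Fintype.card_subtype_compl,
      Set.card_range_of_injective (repDigit_injective hβ hsep)]
    rw [card_pair zero_ne_one, ← pow_add, Nat.sub_add_cancel hN, Int.card_Ico_zero_two_pow,
      Fintype.card_prod, Fintype.card_fin, Fintype.card_fin, ← pow_mul, mul_comm]
  have hΦ := hX.measure_snd_eq_inv_card (Φ := Φ)
    (fun x _ => mem_product.mpr ⟨Fintype.mem_piFinset.mpr fun _ => hbit _,
      Fintype.mem_piFinset.mpr fun _ => hbit _⟩) hinj hcard (Fintype.mem_piFinset.mpr hε)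
  rw [Fintype.card_piFinset, prod_const, card_univ, card_pair zero_ne_one, Nat.cast_pow,
    Nat.cast_ofNat, ENNReal.inv_pow] at hΦ
  rw [← hΦ]
  congr with ω
  simp [Φ, funext_iff]

theorem measure_oddIndicator_eq (hX : IsIndepUniform input (Ico 0 (2^m)) μ)
    {b : ℕ × (Fin (2^m) × Fin (2^m))} (hb : IsBalancer m b) {a : ℤ}
    (ha : a ∈ ({0, 1} : Finset ℤ)) :
    μ {ω | oddIndicator pt (fun v => input v ω) b = a} = 2⁻¹ := by
  simpa using measure_oddIndicator_eq_pattern pt hX (β := fun _ : Unit => b) (fun _ => hb)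
    (fun _ _ _ _ => rfl) (ε := fun _ => a) fun _ => ha

theorem iIndepFun_oddIndicator (hX : IsIndepUniform input (Ico 0 (2^m)) μ)
    (hβ : ∀ j, IsBalancer m (β j)) (hsep : IsSeparated β) :
    iIndepFun (fun j ω => oddIndicator pt (fun v => input v ω) (β j)) μ := by
  have : Finite ι := .of_injective _ (repDigit_injective hβ hsep)
  have := Fintype.ofFinite ι
  refine iIndepFun_of_measure_eq_prod (S := fun _ => ↑({0, 1} : Finset ℤ))
    (fun j => (measurable_of_countable fun x => oddIndicator pt x (β j)).comp
      (measurable_pi_lambda _ hX.measurable))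
    (fun j ω => ?_) fun ε hε => ?_
  · rcases Int.emod_two_eq (loads (cccMatching m) pt (fun v => input v ω) ((β j).1 - 1)
      (β j).2.1 + loads (cccMatching m) pt (fun v => input v ω) ((β j).1 - 1) (β j).2.2)
      with h | h <;> simp [oddIndicator, h]
  · rw [measure_oddIndicator_eq_pattern pt hX hβ hsep hε,
      prod_congr rfl fun j _ => measure_oddIndicator_eq pt hX (hβ j) (hε j), prod_const,
      card_univ]

end Family

end CCC

theorem stmt8_odd_half_and_independent_general
    (m : ℕ)
    (pt : ℕ → Fin (2^m) × Fin (2^m) → Fin (2^m))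
    {Ω : Type} [MeasurableSpace Ω] (μ : Measure Ω) [IsProbabilityMeasure μ]
    (input : Fin (2^m) → Ω → ℤ)
    (hmeas : ∀ v, Measurable (input v))
    (hindep : iIndepFun input μ)
    (hrange : ∀ v ω, 0 ≤ input v ω ∧ input v ω < 2^m)
    (hunif : ∀ v, ∀ k : ℤ, 0 ≤ k → k < 2^m →
      μ {ω | input v ω = k} = ((2^m : ℝ≥0∞))⁻¹) :
    (∀ ℓ, 1 ≤ ℓ → ℓ ≤ m → ∀ e ∈ cccMatching m ℓ,
      μ {ω | ¬ (2 : ℤ) ∣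
          (loads (cccMatching m) pt (fun v => input v ω) (ℓ - 1) e.1 +
           loads (cccMatching m) pt (fun v => input v ω) (ℓ - 1) e.2)} = 1/2) ∧
    (∀ i : Fin (2^m),
      iIndepFun
        (fun (b : {p : ℕ × (Fin (2^m) × Fin (2^m)) //
            1 ≤ p.1 ∧ p.1 ≤ m ∧ p.2 ∈ cccMatching m p.1 ∧ balAffects m p.1 p.2 m i})
          (ω : Ω) =>
          (loads (cccMatching m) pt (fun v => input v ω) (b.val.1 - 1) b.val.2.1 +
           loads (cccMatching m) pt (fun v => input v ω) (b.val.1 - 1) b.val.2.2) % 2)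
        μ) := by
  have hX : IsIndepUniform input (Ico 0 (2^m)) μ :=
    ⟨hmeas, hindep, fun v ω => mem_Ico.mpr (hrange v ω), fun v a ha => by
      rw [Int.card_Ico_zero_two_pow, Nat.cast_pow, Nat.cast_ofNat]
      exact hunif v a (mem_Ico.mp ha).1 (mem_Ico.mp ha).2⟩
  refine ⟨fun ℓ hℓ hℓm e he => ?_, fun i => ?_⟩
  · simp_rw [Int.two_dvd_ne_zero, one_div]
    exact CCC.measure_oddIndicator_eq pt hX (b := (ℓ, e)) ⟨hℓ, hℓm, he⟩ (by simp)
  · exact CCC.iIndepFun_oddIndicator pt hX (fun b => ⟨b.2.1, b.2.2.1, b.2.2.2.1⟩)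
      (CCC.isSeparated_balAffects i)

/-- In the `CCC` on `n = 2^m` wires with any fixed orientation of the
balancers and independent inputs uniform on `{0, …, n-1}`, every balancer receives an
odd total input with probability exactly `1/2`; moreover, for every output wire `i`,
the odd-indicators of the balancers affecting `i` are mutually independent. -/
theorem stmt8_odd_half_and_independent
    (m : ℕ) (hm : 1 ≤ m)
    (pt : ℕ → Fin (2^m) × Fin (2^m) → Fin (2^m))
    (hpt : ∀ ℓ, ∀ e ∈ cccMatching m ℓ, pt ℓ e = e.1 ∨ pt ℓ e = e.2)
    {Ω : Type} [MeasurableSpace Ω] (μ : Measure Ω) [IsProbabilityMeasure μ]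
    (input : Fin (2^m) → Ω → ℤ)
    (hmeas : ∀ v, Measurable (input v))
    (hindep : iIndepFun input μ)
    (hrange : ∀ v ω, 0 ≤ input v ω ∧ input v ω < 2^m)
    (hunif : ∀ v, ∀ k : ℤ, 0 ≤ k → k < 2^m →
      μ {ω | input v ω = k} = ((2^m : ℝ≥0∞))⁻¹) :
    (∀ ℓ, 1 ≤ ℓ → ℓ ≤ m → ∀ e ∈ cccMatching m ℓ,
      μ {ω | ¬ (2 : ℤ) ∣
          (loads (cccMatching m) pt (fun v => input v ω) (ℓ - 1) e.1 +
           loads (cccMatching m) pt (fun v => input v ω) (ℓ - 1) e.2)} = 1/2) ∧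
    (∀ i : Fin (2^m),
      iIndepFun
        (fun (b : {p : ℕ × (Fin (2^m) × Fin (2^m)) //
            1 ≤ p.1 ∧ p.1 ≤ m ∧ p.2 ∈ cccMatching m p.1 ∧ balAffects m p.1 p.2 m i})
          (ω : Ω) =>
          (loads (cccMatching m) pt (fun v => input v ω) (b.val.1 - 1) b.val.2.1 +
           loads (cccMatching m) pt (fun v => input v ω) (b.val.1 - 1) b.val.2.2) % 2)
        μ) :=
  stmt8_odd_half_and_independent_general m pt μ input hmeas hindep hrange hunif
end

section
/- Consider the CCC_n network with the all-up orientation after an α-perturbation, with arbitrary integer input loads, and let μ be the average input load. For each balancer b let Ψ(b) = 1/2 if b was not perturbed (still points up) and Ψ(b) = −1/2 if it was perturbed, and let Odd(b) be the indicator that b received an odd total input. Then the number of tokens y_1 exiting on the top output wire satisfies the exact identity y_1 = μ + Σ_{ℓ=1}^{log n} 2^{−log n + ℓ} Σ_{b∈B_1(ℓ)} Odd(b)·Ψ(b). -/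
open MeasureTheory ProbabilityTheory
open scoped ENNReal

open BalNet

/-!
After layer `k` exactly the wires `u` with `2^k ∣ u` still reach the top wire (`topCone m k`).
Layer `k+1` pairs each `u` with `2^(k+1) ∣ u` with its partner `u + 2^k`; these pairs exhaust
`topCone m k`, and each balancer leaves `(x_u + x_v)/2 + Odd(b) Ψ(b)` on `u`. Hence the total
load `S_k` on `topCone m k` obeys `S_{k+1} = S_k / 2 + Σ_{b ∈ B_1(k+1)} Odd(b) Ψ(b)`, and
unrolling this recurrence from `S_0 = Σ_v y0 v` to `S_m = y_m(top)` gives the identity.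
-/

namespace Nat

theorem two_pow_succ_dvd_iff {p u : ℕ} : 2^(p+1) ∣ u ↔ 2^p ∣ u ∧ u.testBit p = false := by
  simp only [Nat.dvd_iff_mod_eq_zero, Nat.mod_pow_succ, Nat.testBit_eq_decide_div_mod_eq,
    decide_eq_false_iff_not, Nat.add_eq_zero_iff, Nat.mul_eq_zero, Nat.pow_eq_zero]
  omega

theorem two_pow_dvd_xor_two_pow_iff {p u : ℕ} : 2^p ∣ u ^^^ 2^p ↔ 2^p ∣ u := by
  simp [Nat.dvd_iff_mod_eq_zero, Nat.xor_mod_two_pow]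

theorem testBit_xor_two_pow_self (p u : ℕ) : (u ^^^ 2^p).testBit p = !u.testBit p := by
  simp [Nat.testBit_two_pow_self]

theorem two_pow_succ_dvd_or_dvd_xor_two_pow_iff {p u : ℕ} :
    2^(p+1) ∣ u ∨ 2^(p+1) ∣ u ^^^ 2^p ↔ 2^p ∣ u := by
  rw [two_pow_succ_dvd_iff, two_pow_succ_dvd_iff, two_pow_dvd_xor_two_pow_iff,
    testBit_xor_two_pow_self]
  cases u.testBit p <;> simp

theorem lt_xor_two_pow_iff {p u : ℕ} : u < u ^^^ 2^p ↔ u.testBit p = false := by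
  have hlow : ∀ j, p < j → (u ^^^ 2^p).testBit j = u.testBit j := fun j hj => by
    simp [Nat.testBit_two_pow_of_ne (Nat.ne_of_lt hj)]
  cases hb : u.testBit p
  · exact iff_of_true (Nat.lt_of_testBit p hb (by simp [hb])
      fun j hj => (hlow j hj).symm) rfl
  · refine iff_of_false (Nat.not_lt.mpr (Nat.le_of_lt ?_)) (by simp)
    exact Nat.lt_of_testBit p (by simp [hb]) hb hlow

end Nat

namespace Int

theorem cast_fdiv_two (s : ℤ) :
    ((s.fdiv 2 : ℤ) : ℝ) = s / 2 - (if ¬ 2 ∣ s then 1 else 0) / 2 := by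
  rw [Int.fdiv_eq_ediv_of_nonneg s (by norm_num)]
  rcases Int.even_or_odd' s with ⟨k, rfl | rfl⟩
  · have : 2 * k / 2 = k := by omega
    simp [this]
  · have : (2 * k + 1) / 2 = k := by omega
    have hodd : ¬ (2 : ℤ) ∣ 2 * k + 1 := by omega
    simp only [this, hodd, not_false_eq_true, if_true]
    push_cast; ring

theorem cast_add_one_fdiv_two (s : ℤ) :
    (((s + 1).fdiv 2 : ℤ) : ℝ) = s / 2 + (if ¬ 2 ∣ s then 1 else 0) / 2 := by
  rw [Int.fdiv_eq_ediv_of_nonneg _ (by norm_num)]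
  rcases Int.even_or_odd' s with ⟨k, rfl | rfl⟩
  · have : (2 * k + 1) / 2 = k := by omega
    simp [this]
  · have : (2 * k + 1 + 1) / 2 = k + 1 := by omega
    have hodd : ¬ (2 : ℤ) ∣ 2 * k + 1 := by omega
    simp only [this, hodd, not_false_eq_true, if_true]
    push_cast; ring

end Int

namespace BalNet

variable {n : ℕ} {E : Finset (Fin n × Fin n)} {e e' : Fin n × Fin n} {v : Fin n}

theorem IsMatching.eq_of_mem (hE : IsMatching E) (he : e ∈ E) (he' : e' ∈ E)
    (hv : v = e.1 ∨ v = e.2) (hv' : v = e'.1 ∨ v = e'.2) : e = e' := by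
  by_contra hne
  obtain ⟨h11, h12, h21, h22⟩ := hE.2 e he e' he' hne
  rcases hv with rfl | rfl <;> rcases hv' with h | h <;> simp_all

theorem balStep_of_mem (hE : IsMatching E) (he : e ∈ E) (pt : Fin n × Fin n → Fin n)
    (y : Fin n → ℤ) (hv : v = e.1 ∨ v = e.2) :
    balStep E pt y v =
      if v = pt e then (y e.1 + y e.2 + 1).fdiv 2 else (y e.1 + y e.2).fdiv 2 := by
  have h : ∃ e' ∈ E, v = e'.1 ∨ v = e'.2 := ⟨e, he, hv⟩
  rw [balStep, dif_pos h, hE.eq_of_mem h.choose_spec.1 he h.choose_spec.2 hv]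

theorem cast_balStep_fst (hE : IsMatching E) (he : e ∈ E) (pt : Fin n × Fin n → Fin n)
    (y : Fin n → ℤ) :
    (balStep E pt y e.1 : ℝ) = ((y e.1 : ℝ) + y e.2) / 2 +
      (if ¬ 2 ∣ y e.1 + y e.2 then 1 else 0) * (if pt e = e.1 then 1/2 else -(1/2)) := by
  rw [balStep_of_mem hE he pt y (Or.inl rfl)]
  by_cases hpt : pt e = e.1
  · rw [if_pos hpt.symm, if_pos hpt, Int.cast_add_one_fdiv_two]
    push_cast; ring
  · rw [if_neg (Ne.symm hpt), if_neg hpt, Int.cast_fdiv_two]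
    push_cast; ring

end BalNet

open Finset

theorem isMatching_cccMatching (m ℓ : ℕ) : IsMatching (cccMatching m ℓ) := by
  have hmem : ∀ e ∈ cccMatching m ℓ, e.1 < e.2 ∧ e.2.val = e.1.val ^^^ 2^(ℓ-1) := by
    intro e he
    obtain ⟨hlt, hxor⟩ := (mem_filter.mp he).2
    exact ⟨hlt, by rw [← hxor, Nat.xor_xor_cancel_left]⟩
  refine ⟨fun e he => (hmem e he).1, fun e he e' he' hne => ?_⟩
  obtain ⟨hlt, h2⟩ := hmem e he
  obtain ⟨hlt', h2'⟩ := hmem e' he'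
  have h1 : e.1.val = e.2.val ^^^ 2^(ℓ-1) := by rw [h2, Nat.xor_xor_cancel_right]
  have h1' : e'.1.val = e'.2.val ^^^ 2^(ℓ-1) := by rw [h2', Nat.xor_xor_cancel_right]
  simp only [Fin.lt_def, ne_eq, Fin.ext_iff, Prod.ext_iff] at hlt hlt' hne ⊢
  refine ⟨fun h => hne ⟨h, ?_⟩, fun h => ?_, fun h => ?_, fun h => hne ⟨?_, h⟩⟩
  · rw [h2, h2', h]
  · have : e'.1.val = e.2.val := by rw [h1', ← h, h2]
    omega
  · have : e.1.val = e'.2.val := by rw [h1, h, ← h2']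
    omega
  · rw [h1, h1', h]

section Layer

variable {m p : ℕ}

theorem partnerWire_val (hp : p < m) (u : Fin (2^m)) :
    (partnerWire m (p+1) u).val = u.val ^^^ 2^p := by
  have h : u.val ^^^ 2^p < 2^m :=
    Nat.xor_lt_two_pow u.isLt (Nat.pow_lt_pow_right one_lt_two hp)
  simp [partnerWire, h]

theorem partnerWire_partnerWire (hp : p < m) (u : Fin (2^m)) :
    partnerWire m (p+1) (partnerWire m (p+1) u) = u :=
  Fin.ext (by rw [partnerWire_val hp, partnerWire_val hp, Nat.xor_xor_cancel_right])

theorem mem_cccMatching_succ_iff (hp : p < m) {e : Fin (2^m) × Fin (2^m)} :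
    e ∈ cccMatching m (p+1) ↔ e.1.val.testBit p = false ∧ e.2 = partnerWire m (p+1) e.1 := by
  have hxor : e.1.val ^^^ e.2.val = 2^p ↔ e.2 = partnerWire m (p+1) e.1 := by
    rw [Fin.ext_iff, partnerWire_val hp, ← Nat.xor_right_inj (x := e.1.val),
      Nat.xor_xor_cancel_left]
  simp only [cccMatching, mem_filter, mem_univ, true_and, Nat.add_sub_cancel, hxor]
  constructor
  · rintro ⟨hlt, h2⟩
    rw [h2, Fin.lt_def, partnerWire_val hp, Nat.lt_xor_two_pow_iff] at hlt
    exact ⟨hlt, h2⟩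
  · rintro ⟨hb, h2⟩
    refine ⟨?_, h2⟩
    rwa [h2, Fin.lt_def, partnerWire_val hp, Nat.lt_xor_two_pow_iff]

theorem two_pow_dvd_iff_eq_topWire (u : Fin (2^m)) : 2^m ∣ u.val ↔ u = topWire m := by
  rw [Fin.ext_iff, topWire]
  exact ⟨fun h => Nat.eq_zero_of_dvd_of_lt h u.isLt, fun h => h ▸ dvd_zero _⟩

theorem reachWire_topWire_iff {k ℓ : ℕ} (h : ℓ + k = m) (u : Fin (2^m)) :
    reachWire m k ℓ u (topWire m) ↔ 2^ℓ ∣ u.val := by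
  induction k generalizing ℓ u with
  | zero =>
    subst h
    exact (two_pow_dvd_iff_eq_topWire u).symm
  | succ k ih =>
    rw [reachWire, ih (by omega), ih (by omega), partnerWire_val (by omega),
      Nat.two_pow_succ_dvd_or_dvd_xor_two_pow_iff]

def topCone (m k : ℕ) : Finset (Fin (2^m)) :=
  univ.filter fun u => 2^k ∣ u.val

theorem mem_topCone {k : ℕ} {u : Fin (2^m)} : u ∈ topCone m k ↔ 2^k ∣ u.val := by
  simp [topCone]

theorem topCone_zero : topCone m 0 = univ := by
  ext u; simp [mem_topCone]

theorem topCone_self : topCone m m = {topWire m} := by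
  ext u; rw [mem_topCone, two_pow_dvd_iff_eq_topWire, mem_singleton]

open Classical in
theorem filter_balAffects_topWire_eq_image (hp : p < m) :
    (cccMatching m (p+1)).filter (fun e => balAffects m (p+1) e m (topWire m)) =
      (topCone m (p+1)).image fun u => (u, partnerWire m (p+1) u) := by
  ext ⟨u, v⟩
  have hk : (p+1) + (m - (p+1)) = m := by omega
  simp only [mem_filter, mem_image, mem_cccMatching_succ_iff hp, balAffects,
    reachWire_topWire_iff hk, mem_topCone, Prod.mk.injEq]
  constructor
  · rintro ⟨⟨hb, rfl⟩, hdvd⟩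
    refine ⟨u, hdvd.resolve_right fun h => ?_, rfl, rfl⟩
    rw [partnerWire_val hp, Nat.two_pow_succ_dvd_iff, Nat.testBit_xor_two_pow_self, hb] at h
    exact Bool.noConfusion h.2
  · rintro ⟨u, hdvd, rfl, rfl⟩
    exact ⟨⟨(Nat.two_pow_succ_dvd_iff.mp hdvd).2, rfl⟩, Or.inl hdvd⟩

theorem sum_topCone_eq_sum_topCone_succ (hp : p < m) (f : Fin (2^m) → ℝ) :
    ∑ u ∈ topCone m p, f u = ∑ u ∈ topCone m (p+1), (f u + f (partnerWire m (p+1) u)) := by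
  rw [sum_add_distrib, ← sum_filter_add_sum_filter_not (topCone m p)
    (fun u => u.val.testBit p = false)]
  have hmem : ∀ u, u ∈ topCone m (p+1) ↔ u ∈ topCone m p ∧ u.val.testBit p = false := by
    simp [mem_topCone, Nat.two_pow_succ_dvd_iff]
  congr 1
  · exact sum_congr (by ext u; rw [mem_filter, hmem]) fun _ _ => rfl
  · refine sum_nbij' (partnerWire m (p+1)) (partnerWire m (p+1)) ?_ ?_
      (fun u _ => partnerWire_partnerWire hp u) (fun u _ => partnerWire_partnerWire hp u)
      (fun u _ => by rw [partnerWire_partnerWire hp]) <;>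
    · intro u
      simp [hmem, mem_topCone, partnerWire_val hp, Nat.two_pow_dvd_xor_two_pow_iff]

end Layer

theorem eq_of_halving_recurrence {S T : ℕ → ℝ} {t : ℕ}
    (h : ∀ k < t, S (k+1) = S k / 2 + T (k+1)) :
    S t = S 0 / 2^t + ∑ ℓ ∈ Icc 1 t, 2^ℓ / 2^t * T ℓ := by
  induction t with
  | zero => simp
  | succ t ih =>
    have hterm : ∀ ℓ, (2 : ℝ)^ℓ / 2^t * T ℓ / 2 = 2^ℓ / 2^(t+1) * T ℓ := fun ℓ => by
      rw [pow_succ]; ring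
    rw [h t t.lt_succ_self, ih fun k hk => h k (by omega), sum_Icc_succ_top (by omega),
      add_div, sum_div, sum_congr rfl fun ℓ _ => hterm ℓ, div_self (by positivity), pow_succ]
    ring

section Dynamics

variable (m : ℕ) (fl : ℕ → Fin (2^m) × Fin (2^m) → Bool) (y0 : Fin (2^m) → ℤ)

noncomputable def allUpLoads : ℕ → Fin (2^m) → ℤ :=
  loads (cccMatching m) (ptFrom (fun _ _ => true) fl) y0

open Classical in
/-- `Σ_{b ∈ B_1(ℓ)} Odd(b) Ψ(b)`. -/
noncomputable def layerCorrection (ℓ : ℕ) : ℝ :=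
  ∑ e ∈ (cccMatching m ℓ).filter (fun e => balAffects m ℓ e m (topWire m)),
    (if ¬ (2 : ℤ) ∣ allUpLoads m fl y0 (ℓ - 1) e.1 + allUpLoads m fl y0 (ℓ - 1) e.2
      then (1 : ℝ) else 0) *
    (if fl ℓ e then -(1/2 : ℝ) else 1/2)

variable {m} {p : ℕ}

theorem cast_allUpLoads_succ (hp : p < m) {u : Fin (2^m)} (hu : u ∈ topCone m (p+1)) :
    (allUpLoads m fl y0 (p+1) u : ℝ) =
      ((allUpLoads m fl y0 p u : ℝ) + allUpLoads m fl y0 p (partnerWire m (p+1) u)) / 2 +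
      (if ¬ (2 : ℤ) ∣ allUpLoads m fl y0 p u + allUpLoads m fl y0 p (partnerWire m (p+1) u)
        then (1 : ℝ) else 0) *
      (if fl (p+1) (u, partnerWire m (p+1) u) then -(1/2 : ℝ) else 1/2) := by
  have he : (u, partnerWire m (p+1) u) ∈ cccMatching m (p+1) :=
    (mem_cccMatching_succ_iff hp).mpr ⟨(Nat.two_pow_succ_dvd_iff.mp (mem_topCone.mp hu)).2, rfl⟩
  have hne : u ≠ partnerWire m (p+1) u := ((isMatching_cccMatching m (p+1)).1 _ he).ne
  rw [allUpLoads, loads, cast_balStep_fst (isMatching_cccMatching m (p+1)) he]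
  by_cases hfl : fl (p+1) (u, partnerWire m (p+1) u) <;> simp [ptFrom, hfl, hne.symm]

theorem sum_topCone_allUpLoads_succ (hp : p < m) :
    ∑ u ∈ topCone m (p+1), (allUpLoads m fl y0 (p+1) u : ℝ) =
      (∑ u ∈ topCone m p, (allUpLoads m fl y0 p u : ℝ)) / 2 +
        layerCorrection m fl y0 (p+1) := by
  rw [layerCorrection, filter_balAffects_topWire_eq_image hp,
    sum_image fun _ _ _ _ h => (Prod.mk.inj h).1, sum_topCone_eq_sum_topCone_succ hp, sum_div,
    ← sum_add_distrib, Nat.add_sub_cancel]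
  exact sum_congr rfl fun u hu => cast_allUpLoads_succ fl y0 hp hu

end Dynamics

open Classical in
theorem stmt10_top_wire_unfolding_general
    (m : ℕ)
    (fl : ℕ → Fin (2^m) × Fin (2^m) → Bool)
    (y0 : Fin (2^m) → ℤ) :
    ((loads (cccMatching m) (ptFrom (fun _ _ => true) fl) y0 m (topWire m) : ℝ)) =
      (∑ v, (y0 v : ℝ)) / 2^m +
      ∑ ℓ ∈ Finset.Icc 1 m, (2 : ℝ)^ℓ / 2^m *
        ∑ e ∈ (cccMatching m ℓ).filter (fun e => balAffects m ℓ e m (topWire m)),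
          (if ¬ (2 : ℤ) ∣
              (loads (cccMatching m) (ptFrom (fun _ _ => true) fl) y0 (ℓ - 1) e.1 +
               loads (cccMatching m) (ptFrom (fun _ _ => true) fl) y0 (ℓ - 1) e.2)
            then (1 : ℝ) else 0) *
          (if fl ℓ e then -(1/2 : ℝ) else 1/2) := by
  have h := eq_of_halving_recurrence
    (S := fun t => ∑ u ∈ topCone m t, (allUpLoads m fl y0 t u : ℝ))
    (T := layerCorrection m fl y0) fun k hk => sum_topCone_allUpLoads_succ fl y0 hk
  simp only [topCone_self, topCone_zero, sum_singleton] at h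
  exact h

open Classical in
/-- Backward unfolding for the `CCC` with the all-up initial
orientation and realized flips `fl`: the load on the top output wire equals the
average input load plus `Σ_ℓ 2^(ℓ - log n) Σ_{b ∈ B_1(ℓ)} Odd(b) Ψ(b)`,
where `Ψ(b) = 1/2` if `b` is not flipped and `-1/2` otherwise. -/
theorem stmt10_top_wire_unfolding
    (m : ℕ) (hm : 1 ≤ m)
    (fl : ℕ → Fin (2^m) × Fin (2^m) → Bool)
    (y0 : Fin (2^m) → ℤ) :
    ((loads (cccMatching m) (ptFrom (fun _ _ => true) fl) y0 m (topWire m) : ℝ)) =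
      (∑ v, (y0 v : ℝ)) / 2^m +
      ∑ ℓ ∈ Finset.Icc 1 m, (2 : ℝ)^ℓ / 2^m *
        ∑ e ∈ (cccMatching m ℓ).filter (fun e => balAffects m ℓ e m (topWire m)),
          (if ¬ (2 : ℤ) ∣
              (loads (cccMatching m) (ptFrom (fun _ _ => true) fl) y0 (ℓ - 1) e.1 +
               loads (cccMatching m) (ptFrom (fun _ _ => true) fl) y0 (ℓ - 1) e.2)
            then (1 : ℝ) else 0) *
          (if fl ℓ e then -(1/2 : ℝ) else 1/2) :=
  stmt10_top_wire_unfolding_general m fl y0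
end
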